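/- arXiv:1608.08586 — 2 statements merged into one kernel-verified Lean document; each statement's English description precedes it below -/
import Mathlib

section
/- Let B₁, B₂ be symmetric n×n real matrices satisfying mI ⪯ B₁ ⪯ MI and mI ⪯ B₂ ⪯ MI for some 0 < m ≤ M < ∞. Let β₁ > 0, β₂ = 4β₁M⁴/m², and λ_m = min{β₁m/2, β₁m³}. Then the block matrix W = [[β₁B₁B₂B₁ + β₂B₁, β₁B₁B₂], [β₁B₂B₁, β₁B₂]] satisfies W ≻ λ_m I (i.e., W − λ_m I is positive definite). -/
/-!
With `z = B₁ x + y`, the quadratic form of `W` at `(x, y)` is `β₁ zᵀ B₂ z + β₂ xᵀ B₁ x`.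
Since `y = z - B₁ x`, we have `‖y‖² ≤ 3/2 ‖z‖² + 3 ‖B₁ x‖²`, and `‖B₁ x‖² ≤ M xᵀ B₁ x` because
`B₁ (M I - B₁)` is a product of commuting positive semidefinite matrices. Hence `W ⪰ μ I`
whenever `3/2 μ ≤ β₁ m` and `μ (1 + 3 M m) ≤ β₂ m`; the choice of `β₂` and `λₘ` allows
`μ = 4/3 λₘ`, and the slack `μ - λₘ > 0` makes `W - λₘ I` definite.
-/

open Matrix

lemma Matrix.PosSemidef.of_sub_smul_one {ι R : Type*} [DecidableEq ι] [CommRing R]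
    [PartialOrder R] [StarRing R] [StarOrderedRing R] {A : Matrix ι ι R} {m : R} (hm : 0 ≤ m)
    (h : (A - m • 1).PosSemidef) : A.PosSemidef := by
  simpa using h.add (PosSemidef.one.smul hm)

variable {ι : Type*} [Fintype ι]

lemma dotProduct_sub_self_le (a b : ι → ℝ) :
    (a - b) ⬝ᵥ (a - b) ≤ 3 / 2 * (a ⬝ᵥ a) + 3 * (b ⬝ᵥ b) := by
  have h := dotProduct_star_self_nonneg (a + (2 : ℝ) • b)
  simp only [star_trivial, dotProduct_add, add_dotProduct, dotProduct_smul, smul_dotProduct,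
    smul_eq_mul] at h
  simp only [dotProduct_sub, sub_dotProduct, dotProduct_comm b a] at h ⊢
  linarith

lemma Matrix.sumElim_dotProduct_fromBlocks_mulVec {R : Type*} [CommSemiring R]
    (A B C : Matrix ι ι R) (x y : ι → R) :
    Sum.elim x y ⬝ᵥ (fromBlocks (Aᵀ * B * A + C) (Aᵀ * B) (B * A) B *ᵥ Sum.elim x y)
      = (A *ᵥ x + y) ⬝ᵥ (B *ᵥ (A *ᵥ x + y)) + x ⬝ᵥ (C *ᵥ x) := by
  simp only [fromBlocks_mulVec, sumElim_dotProduct_sumElim, Sum.elim_comp_inl, Sum.elim_comp_inr,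
    ← mulVec_mulVec, add_mulVec, mulVec_add, dotProduct_add, add_dotProduct, dotProduct_mulVec x Aᵀ,
    vecMul_transpose]
  ring

namespace Matrix.PosSemidef

variable [DecidableEq ι]

lemma smul_dotProduct_self_le {A : Matrix ι ι ℝ} {m : ℝ} (h : (A - m • 1).PosSemidef)
    (x : ι → ℝ) : m * (x ⬝ᵥ x) ≤ x ⬝ᵥ (A *ᵥ x) := by
  have := h.dotProduct_mulVec_nonneg x
  simp only [star_trivial, sub_mulVec, smul_mulVec, one_mulVec, dotProduct_sub, dotProduct_smul,
    smul_eq_mul] at this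
  linarith

open scoped MatrixOrder ComplexOrder in
lemma smul_sub_mul_self {𝕜 : Type*} [RCLike 𝕜] {B : Matrix ι ι 𝕜} {M : ℝ}
    (hB : B.PosSemidef) (h : (M • 1 - B).PosSemidef) : (M • B - B * B).PosSemidef := by
  have := Commute.mul_nonneg (nonneg_iff_posSemidef.mpr hB) (nonneg_iff_posSemidef.mpr h)
    (((Commute.one_right B).smul_right M).sub_right (Commute.refl B))
  rwa [nonneg_iff_posSemidef, Matrix.mul_sub, Matrix.mul_smul, Matrix.mul_one] at this

lemma mulVec_dotProduct_mulVec_self_le {B : Matrix ι ι ℝ} {M : ℝ} (hB : B.PosSemidef)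
    (h : (M • 1 - B).PosSemidef) (x : ι → ℝ) :
    (B *ᵥ x) ⬝ᵥ (B *ᵥ x) ≤ M * (x ⬝ᵥ (B *ᵥ x)) := by
  have hBt : Bᵀ = B := by simpa using hB.isHermitian.eq
  have hsq : x ⬝ᵥ (B *ᵥ (B *ᵥ x)) = (B *ᵥ x) ⬝ᵥ (B *ᵥ x) := by
    rw [dotProduct_mulVec, ← hBt, vecMul_transpose, hBt]
  have := (hB.smul_sub_mul_self h).dotProduct_mulVec_nonneg x
  simp only [star_trivial, sub_mulVec, smul_mulVec, ← mulVec_mulVec, dotProduct_sub,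
    dotProduct_smul, smul_eq_mul, hsq] at this
  linarith

end Matrix.PosSemidef

variable [DecidableEq ι]

theorem posSemidef_fromBlocks_sub_smul_one {B₁ B₂ : Matrix ι ι ℝ} (hB₁ : B₁.IsSymm)
    (hB₂ : B₂.IsSymm) {m M β₁ β₂ μ : ℝ} (hm : 0 < m) (hB₁l : (B₁ - m • 1).PosSemidef)
    (hB₁u : (M • 1 - B₁).PosSemidef) (hB₂l : (B₂ - m • 1).PosSemidef) (hβ₁ : 0 ≤ β₁)
    (hμ : 0 ≤ μ) (hμ₁ : 3 / 2 * μ ≤ β₁ * m) (hμ₂ : μ * (1 + 3 * M * m) ≤ β₂ * m) :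
    (fromBlocks (β₁ • (B₁ * B₂ * B₁) + β₂ • B₁) (β₁ • (B₁ * B₂)) (β₁ • (B₂ * B₁)) (β₁ • B₂)
      - μ • 1).PosSemidef := by
  have hW : fromBlocks (β₁ • (B₁ * B₂ * B₁) + β₂ • B₁) (β₁ • (B₁ * B₂)) (β₁ • (B₂ * B₁))
      (β₁ • B₂) = fromBlocks (B₁ᵀ * (β₁ • B₂) * B₁ + β₂ • B₁) (B₁ᵀ * (β₁ • B₂))
      ((β₁ • B₂) * B₁) (β₁ • B₂) := by
    simp only [hB₁.eq, Matrix.mul_smul, Matrix.smul_mul]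
  refine .of_dotProduct_mulVec_nonneg ?_ fun v => ?_
  · rw [IsHermitian, conjTranspose_eq_transpose_of_trivial]
    simp only [transpose_sub, transpose_smul, transpose_one, fromBlocks_transpose, transpose_add,
      transpose_mul, hB₁.eq, hB₂.eq, Matrix.mul_assoc]
  obtain ⟨x, y, rfl⟩ : ∃ x y, v = Sum.elim x y :=
    ⟨v ∘ Sum.inl, v ∘ Sum.inr, (Sum.elim_comp_inl_inr v).symm⟩
  rw [star_trivial, sub_mulVec, dotProduct_sub, hW, sumElim_dotProduct_fromBlocks_mulVec]
  simp only [smul_mulVec, one_mulVec, dotProduct_smul, smul_eq_mul, sumElim_dotProduct_sumElim,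
    sub_nonneg]
  set z := B₁ *ᵥ x + y
  have hy : y = z - B₁ *ᵥ x := by simp [z]
  have hz := hB₂l.smul_dotProduct_self_le z
  have hx := hB₁l.smul_dotProduct_self_le x
  have hw := (hB₁l.of_sub_smul_one hm.le).mulVec_dotProduct_mulVec_self_le hB₁u x
  have hyy : y ⬝ᵥ y ≤ 3 / 2 * (z ⬝ᵥ z) + 3 * ((B₁ *ᵥ x) ⬝ᵥ (B₁ *ᵥ x)) := by
    rw [hy]; exact dotProduct_sub_self_le _ _
  have hzz : 0 ≤ z ⬝ᵥ z := dotProduct_star_self_nonneg z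
  have hxx : 0 ≤ x ⬝ᵥ x := dotProduct_star_self_nonneg x
  have hp : 0 ≤ x ⬝ᵥ (B₁ *ᵥ x) := (mul_nonneg hm.le hxx).trans hx
  refine le_of_mul_le_mul_left ?_ hm
  nlinarith [mul_le_mul_of_nonneg_left hyy hμ, mul_le_mul_of_nonneg_right hμ₁ hzz,
    mul_le_mul_of_nonneg_left hw hμ, mul_le_mul_of_nonneg_left hz hβ₁,
    mul_le_mul_of_nonneg_left hx hμ, mul_le_mul_of_nonneg_right hμ₂ hp]

theorem block_matrix_posdef_general (n : ℕ) (B₁ B₂ : Matrix (Fin n) (Fin n) ℝ)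
    (hB₁ : B₁.IsSymm) (hB₂ : B₂.IsSymm) (m M : ℝ)
    (hm : 0 < m) (hmM : m ≤ M)
    (hB₁l : (B₁ - m • (1 : Matrix (Fin n) (Fin n) ℝ)).PosSemidef)
    (hB₁u : (M • (1 : Matrix (Fin n) (Fin n) ℝ) - B₁).PosSemidef)
    (hB₂l : (B₂ - m • (1 : Matrix (Fin n) (Fin n) ℝ)).PosSemidef)
    (β₁ : ℝ) (hβ₁ : 0 < β₁) :
    (Matrix.fromBlocks
        (β₁ • (B₁ * B₂ * B₁) + (4 * β₁ * M ^ 4 / m ^ 2) • B₁) (β₁ • (B₁ * B₂))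
        (β₁ • (B₂ * B₁)) (β₁ • B₂)
      - min (β₁ * m / 2) (β₁ * m ^ 3) •
        (1 : Matrix (Fin n ⊕ Fin n) (Fin n ⊕ Fin n) ℝ)).PosDef := by
  set lam := min (β₁ * m / 2) (β₁ * m ^ 3)
  have hlam₁ : lam ≤ β₁ * m / 2 := min_le_left _ _
  have hlam₂ : lam ≤ β₁ * m ^ 3 := min_le_right _ _
  have hlam : 0 < lam := lt_min (by positivity) (by positivity)
  have hM : 0 < M := hm.trans_le hmM
  have hM3 : m ^ 3 ≤ M ^ 3 := pow_le_pow_left₀ hm.le hmM 3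
  have hM4 : m ^ 4 ≤ M ^ 4 := pow_le_pow_left₀ hm.le hmM 4
  have hconst : 4 / 3 * lam * (1 + 3 * M * m) ≤ 4 * β₁ * M ^ 4 / m ^ 2 * m := by
    rw [show 4 * β₁ * M ^ 4 / m ^ 2 * m = 4 * β₁ * M ^ 4 / m by field_simp, le_div_iff₀ hm]
    nlinarith [mul_le_mul_of_nonneg_left hlam₂ (by positivity : (0:ℝ) ≤ m ^ 2),
      mul_le_mul_of_nonneg_left hlam₁ (by positivity : (0:ℝ) ≤ M * m ^ 3),
      mul_le_mul_of_nonneg_left hM4 hβ₁.le,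
      mul_le_mul_of_nonneg_left hM3 (by positivity : (0:ℝ) ≤ β₁ * M)]
  have hPSD := posSemidef_fromBlocks_sub_smul_one hB₁ hB₂ hm hB₁l hB₁u hB₂l hβ₁.le
    (by positivity : 0 ≤ 4 / 3 * lam) (by linarith) hconst
  convert PosDef.posSemidef_add hPSD (PosDef.one.smul (by positivity : 0 < lam / 3)) using 1
  module

/-- The block matrix `W` built from `B₁, B₂` with `mI ⪯ Bᵢ ⪯ MI` satisfies
`W ≻ λₘ I` where `λₘ = min (β₁ m / 2) (β₁ m³)` and `β₂ = 4 β₁ M⁴ / m²`. -/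
theorem block_matrix_posdef (n : ℕ) (B₁ B₂ : Matrix (Fin n) (Fin n) ℝ)
    (hB₁ : B₁.IsSymm) (hB₂ : B₂.IsSymm) (m M : ℝ)
    (hm : 0 < m) (hmM : m ≤ M)
    (hB₁l : (B₁ - m • (1 : Matrix (Fin n) (Fin n) ℝ)).PosSemidef)
    (hB₁u : (M • (1 : Matrix (Fin n) (Fin n) ℝ) - B₁).PosSemidef)
    (hB₂l : (B₂ - m • (1 : Matrix (Fin n) (Fin n) ℝ)).PosSemidef)
    (hB₂u : (M • (1 : Matrix (Fin n) (Fin n) ℝ) - B₂).PosSemidef)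
    (β₁ : ℝ) (hβ₁ : 0 < β₁) :
    (Matrix.fromBlocks
        (β₁ • (B₁ * B₂ * B₁) + (4 * β₁ * M ^ 4 / m ^ 2) • B₁) (β₁ • (B₁ * B₂))
        (β₁ • (B₂ * B₁)) (β₁ • B₂)
      - min (β₁ * m / 2) (β₁ * m ^ 3) •
        (1 : Matrix (Fin n ⊕ Fin n) (Fin n ⊕ Fin n) ℝ)).PosDef :=
  block_matrix_posdef_general n B₁ B₂ hB₁ hB₂ m M hm hmM hB₁l hB₁u hB₂l β₁ hβ₁
end

section
/- Let X : ℝᵈ → ℝᵈ be the vector field of a dynamical system and V a continuously differentiable function with a point x̄ and constants λ̃ > 0, ξ̄ > 0 such that the Lie derivative satisfies ∇V(x)ᵀX(x) ≤ −λ̃‖x − x̄‖² and ‖X(x)‖² ≤ c‖x − x̄‖² for some c > 0. Then for a sampled (Euler) step x⁺ = x₀ + h·X(x₀) with ∇V ξ̄-Lipschitz, choosing the step h ≤ λ̃/(c·ξ̄) guarantees ∇V(x₀ + tX(x₀))ᵀX(x₀) ≤ 0 for all t ∈ [0, h]; i.e., V is nonincreasing along the sampled trajectory. -/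
open RealInnerProductSpace

/-- For a sampled Euler step of step size `h ≤ λ̃/(c ξ̄)`, the Lyapunov
function is nonincreasing along the sampled trajectory:
`∇V(x₀ + t X(x₀))ᵀ X(x₀) ≤ 0` for all `t ∈ [0, h]`. -/
theorem self_triggered_step_decrease (d : ℕ)
    (X : EuclideanSpace ℝ (Fin d) → EuclideanSpace ℝ (Fin d))
    (V : EuclideanSpace ℝ (Fin d) → ℝ) (hV : ContDiff ℝ 1 V)
    (xbar : EuclideanSpace ℝ (Fin d))
    (lam c xi : ℝ) (hlam : 0 < lam) (hc : 0 < c) (hxi : 0 < xi)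
    (hlie : ∀ x, ⟪gradient V x, X x⟫ ≤ -(lam * ‖x - xbar‖ ^ 2))
    (hX : ∀ x, ‖X x‖ ^ 2 ≤ c * ‖x - xbar‖ ^ 2)
    (hgradLip : ∀ u v, ‖gradient V u - gradient V v‖ ≤ xi * ‖u - v‖)
    (x₀ : EuclideanSpace ℝ (Fin d))
    (h : ℝ) (hh0 : 0 ≤ h) (hh : h ≤ lam / (c * xi)) :
    ∀ t ∈ Set.Icc (0 : ℝ) h, ⟪gradient V (x₀ + t • X x₀), X x₀⟫ ≤ 0 := by
  intro t ht
  obtain ⟨ht0, hth⟩ := ht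
  have key : ⟪gradient V (x₀ + t • X x₀), X x₀⟫
      = ⟪gradient V x₀, X x₀⟫ + ⟪gradient V (x₀ + t • X x₀) - gradient V x₀, X x₀⟫ := by
    rw [inner_sub_left]; ring
  have hdiff : ⟪gradient V (x₀ + t • X x₀) - gradient V x₀, X x₀⟫
      ≤ t * xi * ‖X x₀‖ ^ 2 := by
    calc ⟪gradient V (x₀ + t • X x₀) - gradient V x₀, X x₀⟫
        ≤ ‖gradient V (x₀ + t • X x₀) - gradient V x₀‖ * ‖X x₀‖ :=
          real_inner_le_norm _ _
      _ ≤ (xi * ‖(x₀ + t • X x₀) - x₀‖) * ‖X x₀‖ := by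
          apply mul_le_mul_of_nonneg_right (hgradLip _ _) (norm_nonneg _)
      _ = t * xi * ‖X x₀‖ ^ 2 := by
          have : (x₀ + t • X x₀) - x₀ = t • X x₀ := by abel
          rw [this, norm_smul, Real.norm_eq_abs, abs_of_nonneg ht0]; ring
  have hXbound : t * xi * ‖X x₀‖ ^ 2 ≤ t * xi * (c * ‖x₀ - xbar‖ ^ 2) := by
    apply mul_le_mul_of_nonneg_left (hX x₀) (by positivity)
  have hfinal : -(lam * ‖x₀ - xbar‖ ^ 2) + t * xi * (c * ‖x₀ - xbar‖ ^ 2) ≤ 0 := by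
    have htle : t * (c * xi) ≤ lam := by
      have := hth.trans hh
      calc t * (c * xi) ≤ (lam / (c * xi)) * (c * xi) := by
            apply mul_le_mul_of_nonneg_right this (by positivity)
        _ = lam := by field_simp
    nlinarith [sq_nonneg ‖x₀ - xbar‖]
  calc ⟪gradient V (x₀ + t • X x₀), X x₀⟫
      = ⟪gradient V x₀, X x₀⟫ + ⟪gradient V (x₀ + t • X x₀) - gradient V x₀, X x₀⟫ := key
    _ ≤ -(lam * ‖x₀ - xbar‖ ^ 2) + t * xi * (c * ‖x₀ - xbar‖ ^ 2) := by
        exact add_le_add (hlie x₀) (hdiff.trans hXbound)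
    _ ≤ 0 := hfinal
end
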